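/- arXiv:1801.07699 — 3 statements merged into one kernel-verified Lean document; each statement's English description precedes it below -/
import Mathlib

section
/- Let E be a random closed subset of the unit circle ∂𝔻 such that there exist constants C > 0 and β ∈ (0,1) with ℙ[E ∩ I ≠ ∅] ≤ C·|I|^β for every arc I ⊆ ∂𝔻. Then for any fixed subset A ⊆ ∂𝔻 with dim_H(A) ≥ β, almost surely dim_H(A ∩ E) ≤ dim_H(A) − β. -/
/-!
Fix `q > 0` with `q + β > dim_H A`, and cover `A` by sets `tₙ` of small diameter with
`∑ diam(tₙ)^(q+β)` small. A subset of the unit circle of diameter `d` lies in an arc of length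
`π d`, so `E` meets `A ∩ tₙ` with probability `≲ diam(tₙ)^β`; the pieces hit by `E` cover `A ∩ E`,
and their expected `q`-cost is `≲ ∑ diam(tₙ)^(q+β)`. By Fatou's lemma `μH[q] (A ∩ E) = 0` almost
surely, hence `dim_H (A ∩ E) ≤ q`; now let `q` decrease to `dim_H A - β`.
-/

open MeasureTheory Set Metric Filter Topology
open scoped ENNReal NNReal

section RandomCover

variable {Ω X : Type*} [MeasurableSpace Ω] [EMetricSpace X]
  (μ : Measure Ω) (E : Ω → Set X) (A : Set X)

/-- `E` is not assumed measurable, so the hitting events are replaced by their measurable hulls. -/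
noncomputable def hitCoverSum (t : ℕ → Set X) (q : ℝ) (ω : Ω) : ℝ≥0∞ :=
  ∑' n, (toMeasurable μ {ω | (E ω ∩ (A ∩ t n)).Nonempty}).indicator (fun _ => ediam (t n) ^ q) ω

lemma measurable_hitCoverSum (t : ℕ → Set X) (q : ℝ) : Measurable (hitCoverSum μ E A t q) :=
  Measurable.tsum fun _ => measurable_const.indicator (measurableSet_toMeasurable _ _)

variable {μ E A}

lemma lintegral_hitCoverSum_le {K : ℝ≥0∞} {q β : ℝ} (hq : 0 < q) (hβ : 0 ≤ β)
    (hhit : ∀ S ⊆ A, μ {ω | (E ω ∩ S).Nonempty} ≤ K * ediam S ^ β)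
    {t : ℕ → Set X} (ht : ∀ n, ediam (t n) ≠ ∞) :
    ∫⁻ ω, hitCoverSum μ E A t q ω ∂μ ≤
      K * ∑' n, ⨆ _ : (t n).Nonempty, ediam (t n) ^ (q + β) := by
  unfold hitCoverSum
  rw [lintegral_tsum fun _ =>
    (measurable_const.indicator (measurableSet_toMeasurable _ _)).aemeasurable,
    ← ENNReal.tsum_mul_left]
  refine ENNReal.tsum_le_tsum fun n => ?_
  rw [lintegral_indicator_const (measurableSet_toMeasurable _ _), measure_toMeasurable]
  rcases (t n).eq_empty_or_nonempty with hempty | hne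
  · simp [hempty]
  rw [iSup_pos hne]
  rcases eq_or_ne (ediam (t n)) 0 with h0 | h0
  · simp [h0, ENNReal.zero_rpow_of_pos hq]
  calc ediam (t n) ^ q * μ {ω | (E ω ∩ (A ∩ t n)).Nonempty}
      ≤ ediam (t n) ^ q * (K * ediam (t n) ^ β) := by
        gcongr
        exact (hhit _ inter_subset_left).trans (by gcongr; exact inter_subset_right)
    _ = K * ediam (t n) ^ (q + β) := by rw [ENNReal.rpow_add _ _ h0 (ht n)]; ring

variable [MeasurableSpace X] [BorelSpace X]

lemma hausdorffMeasure_inter_le_liminf_hitCoverSum {q : ℝ} (hq : 0 < q) {r : ℕ → ℝ≥0∞}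
    (hr : Tendsto r atTop (𝓝 0)) {t : ℕ → ℕ → Set X} (hcover : ∀ m, A ⊆ ⋃ n, t m n)
    (hdiam : ∀ m n, ediam (t m n) ≤ r m) (ω : Ω) :
    μH[q] (A ∩ E ω) ≤ liminf (fun m => hitCoverSum μ E A (t m) q ω) atTop := by
  classical
  let u m n := if (E ω ∩ (A ∩ t m n)).Nonempty then t m n else ∅
  calc μH[q] (A ∩ E ω) ≤ liminf (fun m => ∑' n, ediam (u m n) ^ q) atTop := by
        refine Measure.hausdorffMeasure_le_liminf_tsum q _ r hr u
          (Eventually.of_forall fun m n => ?_) (Eventually.of_forall fun m x hx => ?_)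
        · unfold u; split_ifs
          · exact hdiam m n
          · simp
        · obtain ⟨n, hn⟩ := mem_iUnion.1 (hcover m hx.1)
          have hhit : (E ω ∩ (A ∩ t m n)).Nonempty := ⟨x, hx.2, hx.1, hn⟩
          exact mem_iUnion.2 ⟨n, by simpa [u, hhit] using hn⟩
    _ ≤ liminf (fun m => hitCoverSum μ E A (t m) q ω) atTop := by
        refine liminf_le_liminf (Eventually.of_forall fun m => ENNReal.tsum_le_tsum fun n => ?_)
        unfold u; split_ifs with hhit
        · rw [indicator_of_mem (subset_toMeasurable μ _ hhit)]
        · simp [ENNReal.zero_rpow_of_pos hq]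

lemma exists_cover_tsum_lt_of_hausdorffMeasure_eq_zero {d : ℝ} (hA : μH[d] A = 0)
    {r : ℝ≥0∞} (hr : 0 < r) :
    ∃ t : ℕ → Set X, A ⊆ ⋃ n, t n ∧ (∀ n, ediam (t n) ≤ r) ∧
      ∑' n, ⨆ _ : (t n).Nonempty, ediam (t n) ^ d < r := by
  rw [Measure.hausdorffMeasure_apply, ENNReal.iSup_eq_zero] at hA
  have hinf := ENNReal.iSup_eq_zero.1 (hA r) hr
  have hlt : (⨅ (t : ℕ → Set X) (_ : A ⊆ ⋃ n, t n) (_ : ∀ n, ediam (t n) ≤ r),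
      ∑' n, ⨆ _ : (t n).Nonempty, ediam (t n) ^ d) < r := hinf ▸ hr
  simpa only [iInf_lt_iff, exists_prop] using hlt

lemma ae_hausdorffMeasure_inter_eq_zero {K : ℝ≥0∞} (hK : K ≠ ∞) {q β : ℝ} (hq : 0 < q)
    (hβ : 0 ≤ β) (hhit : ∀ S ⊆ A, μ {ω | (E ω ∩ S).Nonempty} ≤ K * ediam S ^ β)
    (hA : μH[q + β] A = 0) :
    ∀ᵐ ω ∂μ, μH[q] (A ∩ E ω) = 0 := by
  let r : ℕ → ℝ≥0∞ := fun m => ((m + 1 : ℕ) : ℝ≥0∞)⁻¹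
  have hr_pos m : 0 < r m := ENNReal.inv_pos.2 (ENNReal.natCast_ne_top _)
  have hr : Tendsto r atTop (𝓝 0) :=
    ENNReal.tendsto_inv_nat_nhds_zero.comp (tendsto_add_atTop_nat 1)
  choose t hcover hdiam hsum using fun m =>
    exists_cover_tsum_lt_of_hausdorffMeasure_eq_zero hA (hr_pos m)
  have hfin m n : ediam (t m n) ≠ ∞ :=
    ne_top_of_le_ne_top (ENNReal.inv_ne_top.2 (by simp)) (hdiam m n)
  have hFatou : ∫⁻ ω, liminf (fun m => hitCoverSum μ E A (t m) q ω) atTop ∂μ = 0 := by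
    refine le_antisymm ?_ zero_le
    calc ∫⁻ ω, liminf (fun m => hitCoverSum μ E A (t m) q ω) atTop ∂μ
        ≤ liminf (fun m => ∫⁻ ω, hitCoverSum μ E A (t m) q ω ∂μ) atTop :=
          lintegral_liminf_le fun m => measurable_hitCoverSum μ E A (t m) q
      _ ≤ liminf (fun m => K * r m) atTop := liminf_le_liminf (Eventually.of_forall fun m =>
          (lintegral_hitCoverSum_le hq hβ hhit (hfin m)).trans (by gcongr; exact (hsum m).le))
      _ = 0 := by simpa using (ENNReal.Tendsto.const_mul hr (Or.inr hK)).liminf_eq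
  filter_upwards [(lintegral_eq_zero_iff (Measurable.liminf fun m =>
    measurable_hitCoverSum μ E A (t m) q)).1 hFatou] with ω hω
  exact le_antisymm
    ((hausdorffMeasure_inter_le_liminf_hitCoverSum hq hr hcover hdiam ω).trans hω.le) zero_le

lemma ae_dimH_inter_le_of_dimH_lt {K : ℝ≥0∞} (hK : K ≠ ∞) {β : ℝ} (hβ : 0 ≤ β)
    (hhit : ∀ S ⊆ A, μ {ω | (E ω ∩ S).Nonempty} ≤ K * ediam S ^ β)
    {q : ℝ≥0} (hq : 0 < q) (hlt : dimH A < q + ENNReal.ofReal β) :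
    ∀ᵐ ω ∂μ, dimH (A ∩ E ω) ≤ q := by
  have hA : μH[q + β] A = 0 := by
    have := hausdorffMeasure_of_dimH_lt (d := q + β.toNNReal) (by exact_mod_cast hlt)
    rwa [NNReal.coe_add, Real.coe_toNNReal _ hβ] at this
  filter_upwards [ae_hausdorffMeasure_inter_eq_zero hK (NNReal.coe_pos.2 hq) hβ hhit hA]
    with ω hω
  exact dimH_le_of_hausdorffMeasure_ne_top (by rw [hω]; exact ENNReal.zero_ne_top)

theorem ae_dimH_inter_le_dimH_sub {K : ℝ≥0∞} (hK : K ≠ ∞) {β : ℝ} (hβ : 0 ≤ β)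
    (hhit : ∀ S ⊆ A, μ {ω | (E ω ∩ S).Nonempty} ≤ K * ediam S ^ β) :
    ∀ᵐ ω ∂μ, dimH (A ∩ E ω) ≤ dimH A - ENNReal.ofReal β := by
  set D := dimH A - ENNReal.ofReal β
  rcases eq_or_ne D ∞ with hD | hD
  · simp [hD]
  have hbound (n : ℕ) : ∀ᵐ ω ∂μ, dimH (A ∩ E ω) ≤ D + ((n + 1 : ℕ) : ℝ≥0∞)⁻¹ := by
    have hε : ((n + 1 : ℕ) : ℝ≥0∞)⁻¹ = ((n + 1 : ℕ) : ℝ≥0)⁻¹ := by simp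
    have hq : ((D.toNNReal + ((n + 1 : ℕ) : ℝ≥0)⁻¹ : ℝ≥0) : ℝ≥0∞) =
        D + ((n + 1 : ℕ) : ℝ≥0∞)⁻¹ := by
      rw [ENNReal.coe_add, ENNReal.coe_toNNReal hD, hε]
    rw [← hq]
    refine ae_dimH_inter_le_of_dimH_lt hK hβ hhit (by positivity) ?_
    calc dimH A ≤ D + ENNReal.ofReal β := le_tsub_add
      _ < D + ENNReal.ofReal β + ((n + 1 : ℕ) : ℝ≥0∞)⁻¹ :=
          ENNReal.lt_add_right (by finiteness) (by simp)
      _ = _ := by rw [hq, add_right_comm]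
  have hlim : Tendsto (fun n : ℕ => D + ((n + 1 : ℕ) : ℝ≥0∞)⁻¹) atTop (𝓝 D) := by
    simpa using tendsto_const_nhds.add
      (ENNReal.tendsto_inv_nat_nhds_zero.comp (tendsto_add_atTop_nat 1))
  filter_upwards [ae_all_iff.2 hbound] with ω hω
  exact ge_of_tendsto' hlim hω

end RandomCover

section UnitCircle

open Complex
open scoped Real

lemma abs_le_pi_div_two_mul_norm_exp_mul_I_sub_one {ψ : ℝ} (h : |ψ| ≤ π) :
    |ψ| ≤ π / 2 * ‖exp (ψ * I) - 1‖ := by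
  have hsin : 2 / π * (|ψ| / 2) ≤ |Real.sin (ψ / 2)| := by
    rw [Real.abs_sin_eq_sin_abs_of_abs_le_pi (by rw [abs_div, abs_two]; linarith [Real.pi_pos]),
      abs_div, abs_two]
    exact Real.mul_le_sin (by positivity) (by linarith)
  rw [mul_comm (ψ : ℂ), norm_exp_I_mul_ofReal_sub_one, norm_mul, Real.norm_two, Real.norm_eq_abs]
  calc |ψ| = π / 2 * (2 * (2 / π * (|ψ| / 2))) := by field_simp
    _ ≤ π / 2 * (2 * |Real.sin (ψ / 2)|) := by gcongr

lemma exists_exp_mul_I_eq_of_norm_eq_one {x y : ℂ} (hx : ‖x‖ = 1) (hy : ‖y‖ = 1) :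
    ∃ ψ : ℝ, |ψ| ≤ π / 2 * dist y x ∧ exp ((arg x + ψ : ℝ) * I) = y := by
  have hx0 : x ≠ 0 := norm_ne_zero_iff.1 (by rw [hx]; exact one_ne_zero)
  have hz : ‖y / x‖ = 1 := by rw [norm_div, hx, hy, div_one]
  have exp_arg {z : ℂ} (hz : ‖z‖ = 1) : exp (arg z * I) = z := by
    simpa [hz] using norm_mul_exp_arg_mul_I z
  refine ⟨arg (y / x), ?_, ?_⟩
  · have hdist : ‖exp (arg (y / x) * I) - 1‖ = dist y x := by
      rw [exp_arg hz, dist_eq, div_sub_one hx0, norm_div, hx, div_one]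
    calc |arg (y / x)| ≤ π / 2 * ‖exp (arg (y / x) * I) - 1‖ :=
          abs_le_pi_div_two_mul_norm_exp_mul_I_sub_one (abs_arg_le_pi _)
      _ = π / 2 * dist y x := by rw [hdist]
  · rw [ofReal_add, add_mul, exp_add, exp_arg hx, exp_arg hz]
    field_simp

lemma subset_exp_mul_I_image_Icc {S : Set ℂ} (hS : S ⊆ sphere 0 1) {x : ℂ} (hx : x ∈ S) :
    S ⊆ (fun θ : ℝ => exp (θ * I)) ''
      Icc (arg x - π / 2 * diam S) (arg x + π / 2 * diam S) := by
  intro y hy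
  obtain ⟨ψ, hψ, rfl⟩ := exists_exp_mul_I_eq_of_norm_eq_one
    (mem_sphere_zero_iff_norm.1 (hS hx)) (mem_sphere_zero_iff_norm.1 (hS hy))
  have hψS : |ψ| ≤ π / 2 * diam S := hψ.trans (by
    gcongr; exact dist_le_diam_of_mem (isBounded_sphere.subset hS) hy hx)
  exact ⟨arg x + ψ, ⟨by linarith [neg_abs_le ψ], by linarith [le_abs_self ψ]⟩, rfl⟩

lemma measure_nonempty_inter_le_of_subset_sphere {Ω : Type*} [MeasurableSpace Ω]
    (μ : Measure Ω) (E : Ω → Set ℂ) {C β : ℝ} (hβ : 0 ≤ β)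
    (harc : ∀ a b : ℝ, a ≤ b →
      μ {ω | (E ω ∩ (fun θ : ℝ => exp (θ * I)) '' Icc a b).Nonempty}
        ≤ ENNReal.ofReal (C * (b - a) ^ β))
    {S : Set ℂ} (hS : S ⊆ sphere 0 1) :
    μ {ω | (E ω ∩ S).Nonempty} ≤ ENNReal.ofReal C * ENNReal.ofReal π ^ β * ediam S ^ β := by
  rcases S.eq_empty_or_nonempty with rfl | ⟨x, hx⟩
  · simp
  have hdiam : ENNReal.ofReal (diam S) = ediam S :=
    ENNReal.ofReal_toReal (isBounded_iff_ediam_ne_top.1 (isBounded_sphere.subset hS))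
  have hle : arg x - π / 2 * diam S ≤ arg x + π / 2 * diam S := by
    have := diam_nonneg (s := S); have := Real.pi_pos; nlinarith
  calc μ {ω | (E ω ∩ S).Nonempty}
      ≤ μ {ω | (E ω ∩ (fun θ : ℝ => exp (θ * I)) ''
          Icc (arg x - π / 2 * diam S) (arg x + π / 2 * diam S)).Nonempty} :=
        measure_mono fun ω ⟨y, hyE, hyS⟩ => ⟨y, hyE, subset_exp_mul_I_image_Icc hS hx hyS⟩
    _ ≤ ENNReal.ofReal (C * (π * diam S) ^ β) := by convert harc _ _ hle using 4; ring
    _ = ENNReal.ofReal C * ENNReal.ofReal π ^ β * ediam S ^ β := by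
        rw [ENNReal.ofReal_mul' (by positivity), ← ENNReal.ofReal_rpow_of_nonneg (by positivity) hβ,
          ENNReal.ofReal_mul Real.pi_pos.le, ENNReal.mul_rpow_of_nonneg _ _ hβ, hdiam, mul_assoc]

end UnitCircle

theorem random_set_intersection_dimension_drop_general
    {Ω : Type*} [MeasurableSpace Ω] (μ : Measure Ω)
    (E : Ω → Set ℂ)
    (C β : ℝ) (hβ : β ∈ Set.Ioo (0:ℝ) 1)
    (harc : ∀ a b : ℝ, a ≤ b →
      μ {ω | (E ω ∩ (fun θ : ℝ => Complex.exp (θ * Complex.I)) '' Set.Icc a b).Nonempty}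
        ≤ ENNReal.ofReal (C * (b - a) ^ β))
    (A : Set ℂ) (hA : A ⊆ Metric.sphere (0:ℂ) 1) :
    ∀ᵐ ω ∂μ, dimH (A ∩ E ω) ≤ dimH A - ENNReal.ofReal β :=
  ae_dimH_inter_le_dimH_sub (by finiteness) hβ.1.le fun _ hS =>
    measure_nonempty_inter_le_of_subset_sphere μ E hβ.1.le harc (hS.trans hA)

/-- Dimension-drop lemma: for a random subset of the unit circle whose probability of
hitting any arc is bounded by `C * (arc length)^β`, intersecting it with a fixed set `A`
with `dimH A ≥ β` drops the Hausdorff dimension by at least `β`, almost surely. -/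
theorem random_set_intersection_dimension_drop
    {Ω : Type*} [MeasurableSpace Ω] (μ : Measure Ω) [IsProbabilityMeasure μ]
    (E : Ω → Set ℂ) (hE : ∀ ω, E ω ⊆ Metric.sphere (0:ℂ) 1)
    (C β : ℝ) (hC : 0 < C) (hβ : β ∈ Set.Ioo (0:ℝ) 1)
    (harc : ∀ a b : ℝ, a ≤ b →
      μ {ω | (E ω ∩ (fun θ : ℝ => Complex.exp (θ * Complex.I)) '' Set.Icc a b).Nonempty}
        ≤ ENNReal.ofReal (C * (b - a) ^ β))
    (A : Set ℂ) (hA : A ⊆ Metric.sphere (0:ℂ) 1)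
    (hdim : ENNReal.ofReal β ≤ dimH A) :
    ∀ᵐ ω ∂μ, dimH (A ∩ E ω) ≤ dimH A - ENNReal.ofReal β :=
  random_set_intersection_dimension_drop_general μ E C β hβ harc A hA
end

section
/- Let μ and ν be probability measures on a measurable space, A a measurable set with μ(A) = p, and suppose ν ≪ μ with density R = dν/dμ satisfying R ≥ ε·𝟙_A μ-almost everywhere, for some ε ∈ (0,1]. Then there exists a coupling (X, Y) of μ and ν (i.e., a probability measure on the product with marginals μ and ν) such that ℙ[X = Y ∈ A] ≥ p·ε. -/
open MeasureTheory
open scoped ENNReal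

/-!
The measure `σ = ε • μ|_A` lies below `μ` because `ε ≤ 1` and below `ν` because the density of `ν`
is at least `ε` on `A`. Gluing the push-forward of `σ` to the diagonal with the normalised product
of the remainders `μ - σ` and `ν - σ` (which have equal mass) gives a coupling whose diagonal part
alone puts mass `σ A = p ε` on `{X = Y ∈ A}`.
-/

namespace MeasureTheory.Measure

variable {α β : Type*} [MeasurableSpace α] [MeasurableSpace β]

lemma smul_le_self_of_le_one {μ : Measure α} {c : ℝ≥0∞} (hc : c ≤ 1) : c • μ ≤ μ := by
  intro s
  simpa using mul_le_of_le_one_left zero_le hc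

lemma exists_coupling_of_measure_univ_eq (μ : Measure α) (ν : Measure β)
    [IsFiniteMeasure μ] [IsFiniteMeasure ν] (h : μ .univ = ν .univ) :
    ∃ π : Measure (α × β), π.map Prod.fst = μ ∧ π.map Prod.snd = ν := by
  rcases eq_or_ne (μ .univ) 0 with h0 | h0
  · refine ⟨0, ?_, ?_⟩
    · simp [measure_univ_eq_zero.mp h0]
    · simp [measure_univ_eq_zero.mp (h ▸ h0)]
  · have hinv : (μ .univ)⁻¹ * μ .univ = 1 := ENNReal.inv_mul_cancel h0 (measure_ne_top _ _)
    refine ⟨(μ .univ)⁻¹ • μ.prod ν, ?_, ?_⟩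
    · rw [Measure.map_smul, map_fst_prod, smul_smul, ← h, hinv, one_smul]
    · rw [Measure.map_smul, map_snd_prod, smul_smul, hinv, one_smul]

lemma exists_coupling_map_diag_le {σ μ ν : Measure α} [IsFiniteMeasure μ] [IsFiniteMeasure ν]
    (hμ : σ ≤ μ) (hν : σ ≤ ν) (h : μ .univ = ν .univ) :
    ∃ π : Measure (α × α), π.map Prod.fst = μ ∧ π.map Prod.snd = ν ∧
      σ.map (fun x => (x, x)) ≤ π := by
  have : IsFiniteMeasure σ := isFiniteMeasure_of_le μ hμ
  obtain ⟨π, hfst, hsnd⟩ := exists_coupling_of_measure_univ_eq (μ - σ) (ν - σ) (by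
    rw [sub_apply .univ hμ, sub_apply .univ hν, h])
  have hdiag : Measurable (fun x : α => (x, x)) := measurable_id.prodMk measurable_id
  refine ⟨σ.map (fun x => (x, x)) + π, ?_, ?_, Measure.le_add_right le_rfl⟩
  · rw [Measure.map_add _ _ measurable_fst, map_map measurable_fst hdiag,
      Function.comp_def, map_id', hfst, add_comm]
    exact sub_add_cancel_of_le hμ
  · rw [Measure.map_add _ _ measurable_snd, map_map measurable_snd hdiag,
      Function.comp_def, map_id', hsnd, add_comm]
    exact sub_add_cancel_of_le hν

lemma smul_restrict_le_withDensity {μ : Measure α} {A : Set α} {c : ℝ≥0∞} {f : α → ℝ≥0∞}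
    (hf : Measurable f) (h : ∀ᵐ x ∂μ, A.indicator (fun _ => c) x ≤ f x) :
    c • μ.restrict A ≤ μ.withDensity f := by
  set B := {x | c ≤ f x}
  have hB : MeasurableSet B := measurableSet_le measurable_const hf
  have hAB : A ≤ᵐ[μ] B := by
    filter_upwards [h] with x hx hxA
    rwa [Set.indicator_of_mem hxA] at hx
  calc c • μ.restrict A ≤ c • μ.restrict B := smul_le_smul_left c (restrict_mono_ae hAB)
    _ = μ.withDensity (B.indicator fun _ => c) := by
      rw [withDensity_indicator hB, withDensity_const]
    _ ≤ μ.withDensity f :=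
      withDensity_mono (.of_forall fun x => Set.indicator_apply_le' id fun _ => zero_le)

end MeasureTheory.Measure

open Measure in
theorem coupling_of_density_lower_bound_general
    {α : Type*} [MeasurableSpace α]
    (μ ν : Measure α) [IsProbabilityMeasure μ] [IsProbabilityMeasure ν]
    (A : Set α)
    (p : ℝ) (hp : μ A = ENNReal.ofReal p)
    (ε : ℝ) (hε : ε ∈ Set.Ioc (0:ℝ) 1)
    (hR : ∀ᵐ x ∂μ, ENNReal.ofReal (ε * A.indicator (fun _ => (1:ℝ)) x) ≤ ν.rnDeriv μ x) :
    ∃ π : Measure (α × α), IsProbabilityMeasure π ∧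
      π.map Prod.fst = μ ∧ π.map Prod.snd = ν ∧
      ENNReal.ofReal (p * ε) ≤ π {z : α × α | z.1 = z.2 ∧ z.1 ∈ A} := by
  obtain ⟨hε0, hε1⟩ := hε
  set σ := ENNReal.ofReal ε • μ.restrict A
  have hσμ : σ ≤ μ :=
    (smul_le_self_of_le_one (ENNReal.ofReal_le_one.2 hε1)).trans restrict_le_self
  have hσν : σ ≤ ν := by
    refine (smul_restrict_le_withDensity (measurable_rnDeriv ν μ) ?_).trans
      (withDensity_rnDeriv_le ν μ)
    filter_upwards [hR] with x hx
    by_cases hxA : x ∈ A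
    · simpa [hxA] using hx
    · simp [hxA]
  obtain ⟨π, hfst, hsnd, hdiag⟩ := exists_coupling_map_diag_le hσμ hσν (by simp)
  have : IsProbabilityMeasure (π.map Prod.fst) := hfst ▸ inferInstance
  refine ⟨π, isProbabilityMeasure_of_map Prod.fst, hfst, hsnd, ?_⟩
  calc ENNReal.ofReal (p * ε) = σ A := by
        simp [σ, hp, ENNReal.ofReal_mul' hε0.le, mul_comm]
    _ ≤ σ.map (fun x => (x, x)) {z : α × α | z.1 = z.2 ∧ z.1 ∈ A} := by
        simpa using le_map_apply (μ := σ) (measurable_id.prodMk measurable_id).aemeasurable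
          {z : α × α | z.1 = z.2 ∧ z.1 ∈ A}
    _ ≤ π _ := hdiag _

/-- If `ν ≪ μ` with density `R ≥ ε · 𝟙_A` μ-a.e. and `μ(A) = p`, then there is a coupling
of `μ` and `ν` under which the two coordinates agree and lie in `A` with probability
at least `p · ε`. -/
theorem coupling_of_density_lower_bound
    {α : Type*} [MeasurableSpace α] [StandardBorelSpace α] [Nonempty α]
    (μ ν : Measure α) [IsProbabilityMeasure μ] [IsProbabilityMeasure ν]
    (A : Set α) (hA : MeasurableSet A)
    (p : ℝ) (hp : μ A = ENNReal.ofReal p)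
    (ε : ℝ) (hε : ε ∈ Set.Ioc (0:ℝ) 1)
    (hac : ν ≪ μ)
    (hR : ∀ᵐ x ∂μ, ENNReal.ofReal (ε * A.indicator (fun _ => (1:ℝ)) x) ≤ ν.rnDeriv μ x) :
    ∃ π : Measure (α × α), IsProbabilityMeasure π ∧
      π.map Prod.fst = μ ∧ π.map Prod.snd = ν ∧
      ENNReal.ofReal (p * ε) ≤ π {z : α × α | z.1 = z.2 ∧ z.1 ∈ A} :=
  coupling_of_density_lower_bound_general μ ν A p hp ε hε hR
end

section
/- Let S be a measurable space and P a Markov kernel on S. Suppose there exist k ≥ 1 and p₀ > 0 such that for any two initial states there is a coupling of the two chains with ℙ[X_k = X̃_k] ≥ p₀. Then for any two initial distributions μ, ν and every n ≥ 1, the total variation distance between μP^{kn} and νP^{kn} is at most (1 − p₀)^n. -/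
/-!
Fix `B` and write `f_m x = (P ^ (k * m)) x B`. Chapman–Kolmogorov gives
`f_{m+1} x - f_{m+1} y = ∫ f_m d(P^k x) - ∫ f_m d(P^k y)`, and computing this difference under a
coupling of `P^k x` and `P^k y` only the off-diagonal part, of mass at most `1 - p₀`, contributes.
So the oscillation `sup_{x,y} |f_m x - f_m y|` contracts by the factor `1 - p₀` every `k` steps,
and integrating `f_n` against two arbitrary initial laws does not increase it.
-/

open MeasureTheory ProbabilityTheory

/-- The law at time `n` of a Markov chain with transition kernel `P` started from `μ`. -/
noncomputable def stepMeasure {α : Type*} [MeasurableSpace α]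
    (P : Kernel α α) (μ : Measure α) : ℕ → Measure α
  | 0 => μ
  | n + 1 => (stepMeasure P μ n).bind P

section Coupling

variable {α : Type*} [MeasurableSpace α] {f : α → ℝ} {c : ℝ}

lemma integrable_of_forall_abs_sub_le {μ : Measure α} [IsFiniteMeasure μ]
    (hf : Measurable f) (hosc : ∀ x y, |f x - f y| ≤ c) : Integrable f μ := by
  rcases isEmpty_or_nonempty α with _ | ⟨⟨x₀⟩⟩
  · exact .of_isEmpty
  · refine .of_bound hf.aestronglyMeasurable (|f x₀| + c) (ae_of_all _ fun x => ?_)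
    rw [Real.norm_eq_abs]
    linarith [abs_sub_abs_le_abs_sub (f x) (f x₀), hosc x x₀]

lemma integral_map_fst_sub_integral_map_snd {π : Measure (α × α)} [IsFiniteMeasure π]
    (hf : Measurable f) (hosc : ∀ x y, |f x - f y| ≤ c) :
    ∫ x, f x ∂(π.map Prod.fst) - ∫ x, f x ∂(π.map Prod.snd) = ∫ z, (f z.1 - f z.2) ∂π := by
  rw [integral_map measurable_fst.aemeasurable hf.aestronglyMeasurable,
    integral_map measurable_snd.aemeasurable hf.aestronglyMeasurable]
  exact (integral_sub
    (integrable_of_forall_abs_sub_le (hf.comp measurable_fst) fun _ _ => hosc _ _)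
    (integrable_of_forall_abs_sub_le (hf.comp measurable_snd) fun _ _ => hosc _ _)).symm

/-- The coupling inequality. -/
lemma abs_integral_map_fst_sub_integral_map_snd_le {π : Measure (α × α)}
    [IsProbabilityMeasure π] (hf : Measurable f) (hosc : ∀ x y, |f x - f y| ≤ c) :
    |∫ x, f x ∂(π.map Prod.fst) - ∫ x, f x ∂(π.map Prod.snd)|
      ≤ c * (1 - π.real {z | z.1 = z.2}) := by
  have hc : 0 ≤ c := by
    obtain ⟨z⟩ := nonempty_of_isProbabilityMeasure π
    simpa using hosc z.1 z.1
  set S := {z : α × α | f z.1 - f z.2 ≠ 0}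
  have hS : MeasurableSet S :=
    (((hf.comp measurable_fst).sub (hf.comp measurable_snd)) (measurableSet_singleton 0)).compl
  have hπS : π.real S ≤ 1 - π.real {z | z.1 = z.2} := by
    have hdiag : {z : α × α | z.1 = z.2} ⊆ Sᶜ := fun z (hz : z.1 = z.2) => by simp [S, hz]
    have := measureReal_mono (μ := π) hdiag
    rw [probReal_compl_eq_one_sub hS] at this
    linarith
  rw [integral_map_fst_sub_integral_map_snd hf hosc,
    ← setIntegral_eq_integral_of_forall_compl_eq_zero fun z hz => not_not.1 hz]
  calc ‖∫ z in S, (f z.1 - f z.2) ∂π‖ ≤ c * π.real S :=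
        norm_setIntegral_le_of_norm_le_const (measure_lt_top π S) fun z _ => hosc z.1 z.2
    _ ≤ c * (1 - π.real {z | z.1 = z.2}) := mul_le_mul_of_nonneg_left hπS hc

lemma abs_integral_sub_integral_le_of_forall_abs_sub_le {μ ν : Measure α}
    [IsProbabilityMeasure μ] [IsProbabilityMeasure ν]
    (hf : Measurable f) (hosc : ∀ x y, |f x - f y| ≤ c) :
    |∫ x, f x ∂μ - ∫ x, f x ∂ν| ≤ c := by
  have h := integral_map_fst_sub_integral_map_snd (π := μ.prod ν) hf hosc
  rw [Measure.map_fst_prod, Measure.map_snd_prod] at h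
  simp only [measure_univ, one_smul] at h
  rw [h]
  simpa using norm_integral_le_of_norm_le_const (μ := μ.prod ν)
    (f := fun z => f z.1 - f z.2) (ae_of_all _ fun z => hosc z.1 z.2)

end Coupling

section MarkovChain

variable {α : Type*} [MeasurableSpace α]

instance ProbabilityTheory.Kernel.isMarkovKernel_pow (P : Kernel α α) [IsMarkovKernel P] (n : ℕ) :
    IsMarkovKernel (P ^ n) := by
  induction n with
  | zero => rw [pow_zero]; exact inferInstanceAs (IsMarkovKernel Kernel.id)
  | succ n ih => rw [pow_succ']; exact Kernel.IsMarkovKernel.comp _ _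

lemma stepMeasure_eq_comp_pow (P : Kernel α α) (μ : Measure α) (n : ℕ) :
    stepMeasure P μ n = (P ^ n) ∘ₘ μ := by
  induction n with
  | zero => exact Measure.id_comp.symm
  | succ n ih => rw [stepMeasure, ih, pow_succ']; exact Measure.comp_assoc

lemma MeasureTheory.Measure.measureReal_comp_eq_integral {β : Type*} [MeasurableSpace β] (κ : Kernel α β)
    [IsFiniteKernel κ] (μ : Measure α) {B : Set β} (hB : MeasurableSet B) :
    (κ ∘ₘ μ).real B = ∫ x, (κ x).real B ∂μ := by
  rw [measureReal_def, Measure.bind_apply hB κ.aemeasurable]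
  exact (integral_toReal (κ.measurable_coe hB).aemeasurable
    (ae_of_all _ fun x => measure_lt_top _ _)).symm

theorem abs_measureReal_pow_mul_sub_le (P : Kernel α α) [IsMarkovKernel P] {k : ℕ} {p : ℝ}
    (hcouple : ∀ x y : α, ∃ π : Measure (α × α), IsProbabilityMeasure π ∧
      π.map Prod.fst = (P ^ k) x ∧ π.map Prod.snd = (P ^ k) y ∧ p ≤ π.real {z | z.1 = z.2})
    {B : Set α} (hB : MeasurableSet B) (m : ℕ) :
    ∀ x y, |((P ^ (k * m)) x).real B - ((P ^ (k * m)) y).real B| ≤ (1 - p) ^ m := by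
  induction m with
  | zero =>
    intro x y
    rw [pow_zero]
    exact abs_sub_le_of_nonneg_of_le measureReal_nonneg measureReal_le_one
      measureReal_nonneg measureReal_le_one
  | succ m ih =>
    intro x y
    obtain ⟨π, hπ, hx, hy, hp⟩ := hcouple x y
    have hf : Measurable fun z => ((P ^ (k * m)) z).real B :=
      ((P ^ (k * m)).measurable_coe hB).ennreal_toReal
    rw [mul_add_one, Kernel.pow_add, Kernel.comp_apply, Kernel.comp_apply,
      Measure.measureReal_comp_eq_integral _ _ hB, Measure.measureReal_comp_eq_integral _ _ hB,
      ← hx, ← hy]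
    calc _ ≤ (1 - p) ^ m * (1 - π.real {z | z.1 = z.2}) :=
          abs_integral_map_fst_sub_integral_map_snd_le hf ih
      _ ≤ (1 - p) ^ m * (1 - p) := by
          have : 0 ≤ 1 - p := sub_nonneg.2 (hp.trans measureReal_le_one)
          gcongr
      _ = (1 - p) ^ (m + 1) := (pow_succ _ _).symm

end MarkovChain

theorem tv_bound_of_uniform_coupling_general
    {α : Type*} [MeasurableSpace α] (P : Kernel α α) [IsMarkovKernel P]
    (k : ℕ) (p₀ : ℝ)
    (hcouple : ∀ x y : α, ∃ π : Measure (α × α), IsProbabilityMeasure π ∧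
      π.map Prod.fst = stepMeasure P (Measure.dirac x) k ∧
      π.map Prod.snd = stepMeasure P (Measure.dirac y) k ∧
      ENNReal.ofReal p₀ ≤ π {z : α × α | z.1 = z.2}) :
    ∀ μ ν : Measure α, IsProbabilityMeasure μ → IsProbabilityMeasure ν →
      ∀ n : ℕ, 1 ≤ n → ∀ B : Set α, MeasurableSet B →
        |(stepMeasure P μ (k * n) B).toReal - (stepMeasure P ν (k * n) B).toReal|
          ≤ (1 - p₀) ^ n := by
  intro μ ν _ _ n _ B hB
  have hcouple_pow : ∀ x y : α, ∃ π : Measure (α × α), IsProbabilityMeasure π ∧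
      π.map Prod.fst = (P ^ k) x ∧ π.map Prod.snd = (P ^ k) y ∧
      p₀ ≤ π.real {z | z.1 = z.2} := fun x y => by
    obtain ⟨π, hπ, hx, hy, hp⟩ := hcouple x y
    simp only [stepMeasure_eq_comp_pow, Measure.dirac_bind (P ^ k).measurable] at hx hy
    exact ⟨π, hπ, hx, hy, (ENNReal.ofReal_le_iff_le_toReal (measure_ne_top _ _)).1 hp⟩
  simp only [← measureReal_def, stepMeasure_eq_comp_pow,
    Measure.measureReal_comp_eq_integral _ _ hB]
  exact abs_integral_sub_integral_le_of_forall_abs_sub_le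
    ((P ^ (k * n)).measurable_coe hB).ennreal_toReal
    (abs_measureReal_pow_mul_sub_le P hcouple_pow hB n)

/-- Geometric total variation bound: under a uniform `k`-step coupling condition with
success probability `p₀`, the time-`kn` laws from any two initial distributions are
within total variation distance `(1 - p₀)^n`. -/
theorem tv_bound_of_uniform_coupling
    {α : Type*} [MeasurableSpace α] (P : Kernel α α) [IsMarkovKernel P]
    (k : ℕ) (hk : 1 ≤ k) (p₀ : ℝ) (hp₀ : 0 < p₀)
    (hcouple : ∀ x y : α, ∃ π : Measure (α × α), IsProbabilityMeasure π ∧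
      π.map Prod.fst = stepMeasure P (Measure.dirac x) k ∧
      π.map Prod.snd = stepMeasure P (Measure.dirac y) k ∧
      ENNReal.ofReal p₀ ≤ π {z : α × α | z.1 = z.2}) :
    ∀ μ ν : Measure α, IsProbabilityMeasure μ → IsProbabilityMeasure ν →
      ∀ n : ℕ, 1 ≤ n → ∀ B : Set α, MeasurableSet B →
        |(stepMeasure P μ (k * n) B).toReal - (stepMeasure P ν (k * n) B).toReal|
          ≤ (1 - p₀) ^ n :=
  tv_bound_of_uniform_coupling_general P k p₀ hcouple
end
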